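/- The derivative of the complete elliptic integral of the first kind satisfies dK/dk = E(k)/(k(1-k^2)) - K(k)/k for 0 < k < 1, where K(k) = ∫₀^{π/2} dt/√(1-k²sin²t) and E(k) = ∫₀^{π/2} √(1-k²sin²t) dt. -/

import Mathlib

open Real

/-- Complete elliptic integral of the first kind. -/
noncomputable def Kel (k : ℝ) : ℝ :=
  ∫ t in (0:ℝ)..(Real.pi / 2), 1 / Real.sqrt (1 - k ^ 2 * Real.sin t ^ 2)

/-- Complete elliptic integral of the second kind. -/
noncomputable def Eel (k : ℝ) : ℝ :=
  ∫ t in (0:ℝ)..(Real.pi / 2), Real.sqrt (1 - k ^ 2 * Real.sin t ^ 2)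

/-!
Write `Δ(k, t) = √(1 - k² sin² t)`. Differentiating under the integral sign (the `k`-derivative
`k sin² t / Δ³` is bounded uniformly for `|k| ≤ m < 1`) gives `K' = ∫ k sin² t / Δ³`, and since
`k² sin² t = 1 - Δ²` this is `(∫ Δ⁻³ - K) / k`. Legendre's identity
`d/dt (k² sin t cos t / Δ) = Δ - (1 - k²) / Δ³`, whose left side vanishes at both ends of
`[0, π/2]`, gives `(1 - k²) ∫ Δ⁻³ = E`.
-/

noncomputable def ellipticDelta (k t : ℝ) : ℝ := √(1 - k ^ 2 * sin t ^ 2)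

section ellipticDelta

variable {k : ℝ}

lemma one_sub_sq_mul_sin_sq_pos (hk : |k| < 1) (t : ℝ) : 0 < 1 - k ^ 2 * sin t ^ 2 := by
  have : k ^ 2 < 1 := by rwa [sq_lt_one_iff_abs_lt_one]
  nlinarith [sin_sq_le_one t, sq_nonneg k]

lemma ellipticDelta_pos (hk : |k| < 1) (t : ℝ) : 0 < ellipticDelta k t :=
  sqrt_pos.2 (one_sub_sq_mul_sin_sq_pos hk t)

lemma ellipticDelta_ne_zero (hk : |k| < 1) (t : ℝ) : ellipticDelta k t ≠ 0 :=
  (ellipticDelta_pos hk t).ne'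

lemma ellipticDelta_sq (hk : |k| < 1) (t : ℝ) : ellipticDelta k t ^ 2 = 1 - k ^ 2 * sin t ^ 2 :=
  sq_sqrt (one_sub_sq_mul_sin_sq_pos hk t).le

@[fun_prop]
lemma continuous_ellipticDelta (k : ℝ) : Continuous (ellipticDelta k) := by
  unfold ellipticDelta; fun_prop

lemma intervalIntegrable_div_ellipticDelta_pow (hk : |k| < 1) (c : ℝ) (n : ℕ) (a b : ℝ) :
    IntervalIntegrable (fun t => c / ellipticDelta k t ^ n) MeasureTheory.volume a b :=
  (continuous_const.div (by fun_prop) fun t => pow_ne_zero n (ellipticDelta_ne_zero hk t))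
    |>.intervalIntegrable a b

lemma Kel_eq (k : ℝ) : Kel k = ∫ t in (0:ℝ)..π / 2, 1 / ellipticDelta k t := rfl

lemma Eel_eq (k : ℝ) : Eel k = ∫ t in (0:ℝ)..π / 2, ellipticDelta k t := rfl

lemma hasDerivAt_one_div_ellipticDelta (hk : |k| < 1) (t : ℝ) :
    HasDerivAt (fun x => 1 / ellipticDelta x t) (k * sin t ^ 2 / ellipticDelta k t ^ 3) k := by
  have hu : HasDerivAt (fun x => 1 - x ^ 2 * sin t ^ 2) (-(2 * k * sin t ^ 2)) k := by
    simpa using ((hasDerivAt_pow 2 k).mul_const (sin t ^ 2)).const_sub 1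
  simp only [one_div]
  refine ((hu.sqrt (one_sub_sq_mul_sin_sq_pos hk t).ne').inv
    (ellipticDelta_ne_zero hk t)).congr_deriv ?_
  change -(-(2 * k * sin t ^ 2) / (2 * ellipticDelta k t)) / ellipticDelta k t ^ 2 = _
  field_simp

lemma abs_deriv_one_div_ellipticDelta_le {x m : ℝ} (hx : |x| ≤ m) (hm : m < 1) (t : ℝ) :
    |x * sin t ^ 2 / ellipticDelta x t ^ 3| ≤ m / √(1 - m ^ 2) ^ 3 := by
  have hm0 : 0 ≤ m := (abs_nonneg x).trans hx
  have hx1 : |x| < 1 := hx.trans_lt hm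
  have hΔm : 0 < √(1 - m ^ 2) := sqrt_pos.2 (by nlinarith)
  have hΔ : √(1 - m ^ 2) ≤ ellipticDelta x t := by
    apply sqrt_le_sqrt
    nlinarith [sin_sq_le_one t, sq_nonneg (sin t), sq_le_sq' (abs_le.1 hx).1 (abs_le.1 hx).2]
  rw [abs_div, abs_mul, abs_of_nonneg (sq_nonneg (sin t)),
    abs_of_nonneg (pow_nonneg (ellipticDelta_pos hx1 t).le 3)]
  exact div_le_div₀ hm0 ((mul_le_of_le_one_right (abs_nonneg x) (sin_sq_le_one t)).trans hx)
    (pow_pos hΔm 3) (pow_le_pow_left₀ hΔm.le hΔ 3)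

lemma hasDerivAt_Kel (hk : |k| < 1) :
    HasDerivAt Kel (∫ t in (0:ℝ)..π / 2, k * sin t ^ 2 / ellipticDelta k t ^ 3) k := by
  obtain ⟨m, hkm, hm⟩ := exists_between hk
  have hs : Metric.ball 0 m ∈ nhds k := Metric.isOpen_ball.mem_nhds (by simpa using hkm)
  have hball {x : ℝ} (hx : x ∈ Metric.ball 0 m) : |x| < m := by simpa using hx
  refine (intervalIntegral.hasDerivAt_integral_of_dominated_loc_of_deriv_le
    (μ := MeasureTheory.volume) (a := 0) (b := π / 2) (F := fun x t => 1 / ellipticDelta x t)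
    (F' := fun x t => x * sin t ^ 2 / ellipticDelta x t ^ 3)
    (bound := fun _ => m / √(1 - m ^ 2) ^ 3) hs
    (.of_forall fun x => ?_) ?_ ?_ (.of_forall fun t _ x hx => ?_) intervalIntegrable_const
    (.of_forall fun t _ x hx => ?_)).2
  · exact (measurable_const.div (continuous_ellipticDelta x).measurable).aestronglyMeasurable
  · simpa using intervalIntegrable_div_ellipticDelta_pow hk 1 1 0 (π / 2)
  · exact ((by fun_prop : Continuous fun t => k * sin t ^ 2).div (by fun_prop)
      fun t => pow_ne_zero 3 (ellipticDelta_ne_zero hk t)).aestronglyMeasurable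
  · exact abs_deriv_one_div_ellipticDelta_le (hball hx).le hm t
  · exact hasDerivAt_one_div_ellipticDelta ((hball hx).trans hm) t

lemma hasDerivAt_ellipticDelta (hk : |k| < 1) (t : ℝ) :
    HasDerivAt (ellipticDelta k) (-(k ^ 2 * (sin t * cos t)) / ellipticDelta k t) t := by
  have hu : HasDerivAt (fun t => 1 - k ^ 2 * sin t ^ 2) (-(k ^ 2 * (2 * sin t * cos t))) t := by
    simpa using ((hasDerivAt_sin t).pow 2).const_mul (k ^ 2) |>.const_sub 1
  refine (hu.sqrt (one_sub_sq_mul_sin_sq_pos hk t).ne').congr_deriv ?_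
  change _ / (2 * ellipticDelta k t) = _
  ring

lemma hasDerivAt_mul_sin_mul_cos_div_ellipticDelta (hk : |k| < 1) (t : ℝ) :
    HasDerivAt (fun t => k ^ 2 * (sin t * cos t) / ellipticDelta k t)
      (ellipticDelta k t - (1 - k ^ 2) / ellipticDelta k t ^ 3) t := by
  refine ((((hasDerivAt_sin t).mul (hasDerivAt_cos t)).const_mul (k ^ 2)).div
    (hasDerivAt_ellipticDelta hk t) (ellipticDelta_ne_zero hk t)).congr_deriv ?_
  have := ellipticDelta_ne_zero hk t
  simp only [Pi.mul_apply]
  field_simp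
  linear_combination
    (k ^ 2 * (1 - 2 * sin t ^ 2) - ellipticDelta k t ^ 2 - (1 - k ^ 2 * sin t ^ 2))
      * ellipticDelta_sq hk t
    + (k ^ 2 * ellipticDelta k t ^ 2 + k ^ 4 * sin t ^ 2) * sin_sq_add_cos_sq t

lemma one_sub_sq_mul_integral_one_div_ellipticDelta_pow_three (hk : |k| < 1) :
    (1 - k ^ 2) * ∫ t in (0:ℝ)..π / 2, 1 / ellipticDelta k t ^ 3 = Eel k := by
  have hΔ := (continuous_ellipticDelta k).intervalIntegrable (μ := MeasureTheory.volume) 0 (π / 2)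
  have hΔ3 := intervalIntegrable_div_ellipticDelta_pow hk (1 - k ^ 2) 3 0 (π / 2)
  have hFTC :
      ∫ t in (0:ℝ)..π / 2, (ellipticDelta k t - (1 - k ^ 2) / ellipticDelta k t ^ 3) = 0 := by
    rw [intervalIntegral.integral_eq_sub_of_hasDerivAt
      (fun t _ => hasDerivAt_mul_sin_mul_cos_div_ellipticDelta hk t) (hΔ.sub hΔ3)]
    simp
  rw [intervalIntegral.integral_sub hΔ hΔ3, sub_eq_zero, ← Eel_eq] at hFTC
  simp_rw [hFTC, ← intervalIntegral.integral_const_mul, mul_one_div]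

lemma integral_mul_sin_sq_div_ellipticDelta_pow_three (hk0 : k ≠ 0) (hk : |k| < 1) :
    ∫ t in (0:ℝ)..π / 2, k * sin t ^ 2 / ellipticDelta k t ^ 3
      = Eel k / (k * (1 - k ^ 2)) - Kel k / k := by
  have hk2 : 1 - k ^ 2 ≠ 0 := by
    have := (sq_lt_one_iff_abs_lt_one k).2 hk
    linarith
  have hpt (t : ℝ) : k * sin t ^ 2 / ellipticDelta k t ^ 3
      = (1 / ellipticDelta k t ^ 3 - 1 / ellipticDelta k t) / k := by
    have := ellipticDelta_ne_zero hk t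
    field_simp
    linear_combination ellipticDelta_sq hk t
  simp_rw [hpt]
  rw [intervalIntegral.integral_div, intervalIntegral.integral_sub
    (intervalIntegrable_div_ellipticDelta_pow hk 1 3 _ _)
    (by simpa using intervalIntegrable_div_ellipticDelta_pow hk 1 1 0 (π / 2)), ← Kel_eq,
    ← one_sub_sq_mul_integral_one_div_ellipticDelta_pow_three hk]
  field_simp

end ellipticDelta

theorem deriv_Kel (k : ℝ) (hk0 : 0 < k) (hk1 : k < 1) :
    HasDerivAt Kel (Eel k / (k * (1 - k ^ 2)) - Kel k / k) k := by
  have hk : |k| < 1 := abs_lt.2 ⟨by linarith, hk1⟩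
  simpa only [integral_mul_sin_sq_div_ellipticDelta_pow_three hk0.ne' hk] using hasDerivAt_Kel hk
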